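/- Let r > 2 and α > 0, and set a = ₃F₂(α, α, 1/2; 1, 1; 4/r²), b = (α/r)·₃F₂(α, α+1, 3/2; 2, 2; 4/r²), c = (α²/r²)·₃F₂(α+1, α+1, 3/2; 2, 3; 4/r²). Suppose the 3×3 matrix M with rows (a, b, b), (b, a, c), (b, c, a) is invertible with a ≠ c, and let (p₀, p₁, p₂) = M⁻¹(1, 0, 0)ᵀ. Then the polynomial p₀ + p₁(z₁+z₂) has a zero in the open bidisk 𝔻² if and only if 2(α/r)·₃F₂(α, α+1, 3/2; 2, 2; 4/r²) > ₃F₂(α, α, 1/2; 1, 1; 4/r²) + (α²/r²)·₃F₂(α+1, α+1, 3/2; 2, 3; 4/r²). -/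

import Mathlib

open scoped BigOperators

/-- The (rising) Pochhammer symbol `(a)_n` for a real number `a`. -/
noncomputable def poch (a : ℝ) (n : ℕ) : ℝ := (ascPochhammer ℝ n).eval a

/-- The generalized hypergeometric series `₃F₂(a₁,a₂,a₃; b₁,b₂; x)`. -/
noncomputable def F32 (a₁ a₂ a₃ b₁ b₂ x : ℝ) : ℝ :=
  ∑' n : ℕ, (poch a₁ n * poch a₂ n * poch a₃ n) /
      (poch b₁ n * poch b₂ n * (n.factorial : ℝ)) * x ^ n

open Filter Topology in
private lemma poch_succ' (a : ℝ) (n : ℕ) : poch a (n+1) = poch a n * (a + n) := by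
  simp [poch, ascPochhammer_succ_right]

private lemma poch_pos' {a : ℝ} (ha : 0 < a) (n : ℕ) : 0 < poch a n :=
  ascPochhammer_pos n a ha

open Filter Topology in
private lemma tendsto_ratio' (a b : ℝ) (hb : 0 < b) :
    Tendsto (fun n : ℕ => (a + n) / (b + n)) atTop (𝓝 1) := by
  have hbn : Tendsto (fun n : ℕ => b + (n:ℝ)) atTop atTop :=
    tendsto_atTop_add_const_left _ b tendsto_natCast_atTop_atTop
  have h0 : Tendsto (fun n : ℕ => (a - b) * (b + (n:ℝ))⁻¹) atTop (𝓝 0) := by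
    simpa using (hbn.inv_tendsto_atTop).const_mul (a - b)
  have : Tendsto (fun n : ℕ => 1 + (a - b) * (b + (n:ℝ))⁻¹) atTop (𝓝 1) := by
    simpa using h0.const_add 1
  refine this.congr fun n => ?_
  have hne : b + (n:ℝ) ≠ 0 := by positivity
  field_simp
  ring

open Filter Topology in
private lemma F32_pos' (a₁ a₂ a₃ b₁ b₂ x : ℝ) (h₁ : 0 < a₁) (h₂ : 0 < a₂) (h₃ : 0 < a₃)
    (hb₁ : 0 < b₁) (hb₂ : 0 < b₂) (hx0 : 0 < x) (hx1 : x < 1) :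
    0 < F32 a₁ a₂ a₃ b₁ b₂ x := by
  set t : ℕ → ℝ := fun n => (poch a₁ n * poch a₂ n * poch a₃ n) /
      (poch b₁ n * poch b₂ n * (n.factorial : ℝ)) * x ^ n with ht
  have htpos : ∀ n, 0 < t n := by
    intro n
    have := poch_pos' h₁ n; have := poch_pos' h₂ n; have := poch_pos' h₃ n
    have := poch_pos' hb₁ n; have := poch_pos' hb₂ n
    have : (0:ℝ) < n.factorial := by exact_mod_cast n.factorial_pos
    positivity
  set g : ℕ → ℝ := fun n =>
    ((a₁ + n) / (b₁ + n)) * ((a₂ + n) / (b₂ + n)) * ((a₃ + n) / (1 + n)) * x with hg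
  have hrec : ∀ n, t (n + 1) = t n * g n := by
    intro n
    have p1 := (poch_pos' hb₁ n).ne'
    have p2 := (poch_pos' hb₂ n).ne'
    have pf : ((n.factorial : ℝ)) ≠ 0 := by exact_mod_cast n.factorial_ne_zero
    have hb1n : b₁ + (n:ℝ) ≠ 0 := by positivity
    have hb2n : b₂ + (n:ℝ) ≠ 0 := by positivity
    have h1n : (1:ℝ) + (n:ℝ) ≠ 0 := by positivity
    simp only [ht, hg, poch_succ', Nat.factorial_succ, pow_succ, Nat.cast_mul,
      Nat.cast_add, Nat.cast_one]
    field_simp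
    ring
  have hgt : Tendsto g atTop (𝓝 x) := by
    have h1 := tendsto_ratio' a₁ b₁ hb₁
    have h2 := tendsto_ratio' a₂ b₂ hb₂
    have h3 := tendsto_ratio' a₃ 1 one_pos
    have := ((h1.mul h2).mul h3).mul_const x
    simpa using this
  have hx2 : x < (1 + x) / 2 := by linarith
  have hev : ∀ᶠ n in atTop, g n < (1 + x) / 2 := hgt.eventually (gt_mem_nhds hx2)
  have hsum : Summable t := by
    refine summable_of_ratio_norm_eventually_le (r := (1 + x) / 2) (by linarith) ?_
    filter_upwards [hev] with n hn
    rw [Real.norm_of_nonneg (htpos (n+1)).le, Real.norm_of_nonneg (htpos n).le, hrec]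
    nlinarith [htpos n, hn]
  have : 0 < ∑' n, t n := Summable.tsum_pos hsum (fun n => (htpos n).le) 0 (htpos 0)
  simpa [F32, ht] using this

/-- The degree-one OPA `p₀ + p₁(z₁+z₂)` of `1/f`, `f = (1-(z₁+z₂)/r)^{-α}`, has a zero
in the open bidisk iff `2(α/r) ₃F₂(α,α+1,3/2;2,2;4/r²) > ₃F₂(α,α,1/2;1,1;4/r²) +
(α²/r²) ₃F₂(α+1,α+1,3/2;2,3;4/r²)`. -/
theorem stmt11 (r α : ℝ) (hr : 2 < r) (hα : 0 < α) (a b c : ℝ)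
    (ha : a = F32 α α (1 / 2) 1 1 (4 / r ^ 2))
    (hb : b = α / r * F32 α (α + 1) (3 / 2) 2 2 (4 / r ^ 2))
    (hc : c = α ^ 2 / r ^ 2 * F32 (α + 1) (α + 1) (3 / 2) 2 3 (4 / r ^ 2))
    (M : Matrix (Fin 3) (Fin 3) ℂ)
    (hM : M = Matrix.of ![![(a : ℂ), (b : ℂ), (b : ℂ)],
        ![(b : ℂ), (a : ℂ), (c : ℂ)],
        ![(b : ℂ), (c : ℂ), (a : ℂ)]])
    (hMinv : IsUnit M.det) (hac : a ≠ c)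
    (p : Fin 3 → ℂ) (hp : p = M⁻¹.mulVec ![1, 0, 0]) :
    (∃ z₁ z₂ : ℂ, ‖z₁‖ < 1 ∧ ‖z₂‖ < 1 ∧
        p 0 + p 1 * (z₁ + z₂) = 0) ↔
      2 * (α / r) * F32 α (α + 1) (3 / 2) 2 2 (4 / r ^ 2) >
        F32 α α (1 / 2) 1 1 (4 / r ^ 2) +
          α ^ 2 / r ^ 2 * F32 (α + 1) (α + 1) (3 / 2) 2 3 (4 / r ^ 2) := by
  have hr0 : (0:ℝ) < r := by linarith
  have hx0 : (0:ℝ) < 4 / r ^ 2 := by positivity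
  have hx1 : 4 / r ^ 2 < 1 := by
    rw [div_lt_one (by positivity)]; nlinarith
  have hapos : 0 < a := by
    rw [ha]; exact F32_pos' _ _ _ _ _ _ hα hα (by norm_num) one_pos one_pos hx0 hx1
  have hbpos : 0 < b := by
    rw [hb]
    have := F32_pos' α (α+1) (3/2) 2 2 (4/r^2) hα (by linarith) (by norm_num)
      (by norm_num) (by norm_num) hx0 hx1
    positivity
  have hcpos : 0 < c := by
    rw [hc]
    have := F32_pos' (α+1) (α+1) (3/2) 2 3 (4/r^2) (by linarith) (by linarith)
      (by norm_num) (by norm_num) (by norm_num) hx0 hx1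
    positivity
  set D : ℂ := (a:ℂ) * ((a:ℂ) + (c:ℂ)) - 2 * (b:ℂ) ^ 2 with hD
  have hdet : M.det = ((a:ℂ) - c) * D := by
    subst hM
    rw [Matrix.det_fin_three]
    simp only [Matrix.of_apply, Matrix.cons_val', Matrix.cons_val_zero, Matrix.cons_val_one,
      Matrix.head_cons, Matrix.empty_val', Matrix.cons_val_fin_one, Matrix.head_fin_const,
      Matrix.cons_val_two, Matrix.tail_cons, hD]
    ring
  have hDne : D ≠ 0 := by
    intro h
    exact hMinv.ne_zero (by rw [hdet, h, mul_zero])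
  have hBne : ((b:ℂ)) ≠ 0 := by
    exact_mod_cast hbpos.ne'
  set q : Fin 3 → ℂ := ![((a:ℂ) + c) / D, -(b:ℂ) / D, -(b:ℂ) / D] with hq
  have hMq : M.mulVec q = ![1, 0, 0] := by
    subst hM
    funext i
    fin_cases i <;> simp [hq, Matrix.mulVec, dotProduct, Fin.sum_univ_three] <;>
      field_simp
    · linear_combination -hD
    · ring
    · ring
  have hpq : p = q := by
    rw [hp, ← hMq, Matrix.mulVec_mulVec, Matrix.nonsing_inv_mul M hMinv,
      Matrix.one_mulVec]
  have hp0 : p 0 = ((a:ℂ) + c) / D := by rw [hpq]; rfl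
  have hp1 : p 1 = -(b:ℂ) / D := by rw [hpq]; rfl
  have key : (∃ z₁ z₂ : ℂ, ‖z₁‖ < 1 ∧ ‖z₂‖ < 1 ∧
      p 0 + p 1 * (z₁ + z₂) = 0) ↔ a + c < 2 * b := by
    constructor
    · rintro ⟨z₁, z₂, h1, h2, heq⟩
      rw [hp0, hp1] at heq
      have heq2 : ((a:ℂ) + c) = (b:ℂ) * (z₁ + z₂) := by
        field_simp at heq
        linear_combination heq
      have habs : ‖((a:ℂ) + c)‖ = a + c := by
        rw [show ((a:ℂ) + c) = ((a + c : ℝ) : ℂ) by push_cast; ring,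
          Complex.norm_real, Real.norm_eq_abs, abs_of_pos (by linarith)]
      have hBabs : ‖((b:ℂ))‖ = b := by
        rw [Complex.norm_real, Real.norm_eq_abs, abs_of_pos hbpos]
      have hlt2 : ‖(z₁ + z₂)‖ < 2 := by
        calc ‖(z₁ + z₂)‖ ≤ ‖z₁‖ + ‖z₂‖ :=
          norm_add_le _ _
        _ < 2 := by linarith
      have : ‖((a:ℂ) + c)‖ < b * 2 := by
        rw [heq2, norm_mul, hBabs]
        nlinarith [norm_nonneg (z₁ + z₂)]
      rw [habs] at this; linarith
    · intro hlt
      set w : ℝ := (a + c) / (2 * b) with hw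
      refine ⟨(w : ℂ), (w : ℂ), ?_, ?_, ?_⟩
      · rw [Complex.norm_real, Real.norm_eq_abs, abs_of_pos (by positivity)]
        rw [hw, div_lt_one (by positivity)]; linarith
      · rw [Complex.norm_real, Real.norm_eq_abs, abs_of_pos (by positivity)]
        rw [hw, div_lt_one (by positivity)]; linarith
      · rw [hp0, hp1]
        have hwr : w * (2 * b) = a + c := by
          rw [hw]; field_simp
        have hwb : ((w : ℂ)) * (2 * (b:ℂ)) = (a:ℂ) + c := by
          calc ((w:ℂ)) * (2 * (b:ℂ)) = ((w * (2 * b) : ℝ) : ℂ) := by push_cast; ring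
          _ = (a:ℂ) + c := by rw [hwr]; push_cast; ring
        field_simp
        linear_combination -hwb
  rw [key, ha, hb, hc]
  constructor <;> intro h <;> linarith
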